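/- arXiv:2404.09631 — 7 statements merged into one kernel-verified Lean document; each statement's English description precedes it below -/
import Mathlib

section
/- Let F be a finite set of fluents, let L = F × Bool be the set of literals (with complement flipping the Boolean), and let a state s be a set of literals containing exactly one of f⁺, f⁻ for each fluent f. For states s, s' and any set of literals h, the inclusion chain s' \ s ⊆ h ⊆ s' holds if and only if s' = (s \ complement(h)) ∪ h, where complement(h) is the set of complements of literals in h. -/
/-- The complement of a set of literals. -/
def litCompl {F : Type*} (h : Set (F × Bool)) : Set (F × Bool) := {l | (l.1, !l.2) ∈ h}

/-- Successor function: apply effect hypothesis `h` to state `s`. -/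
def Suc {F : Type*} (h s : Set (F × Bool)) : Set (F × Bool) := (s \ litCompl h) ∪ h

/-- A state contains exactly one of the two literals for each fluent. -/
def IsState {F : Type*} (s : Set (F × Bool)) : Prop :=
  ∀ f : F, Xor' ((f, true) ∈ s) ((f, false) ∈ s)

/-- A set of literals containing no literal together with its complement. -/
def ConflictFree {F : Type*} (h : Set (F × Bool)) : Prop := ∀ l ∈ h, (l.1, !l.2) ∉ h

lemma state_mem_iff {F : Type*} {s : Set (F × Bool)} (hs : IsState s) (f : F) (b : Bool) :
    (f, b) ∈ s ↔ (f, !b) ∉ s := by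
  have := hs f
  cases b <;> simp only [Bool.not_false, Bool.not_true] <;>
    rcases this with ⟨h1, h2⟩ | ⟨h1, h2⟩ <;> tauto

/-- Lemma: effect consistency. -/
theorem effect_consistency {F : Type*} [Fintype F]
    (s s' h : Set (F × Bool)) (hs : IsState s) (hs' : IsState s') :
    (s' \ s ⊆ h ∧ h ⊆ s') ↔ s' = Suc h s := by
  constructor
  · rintro ⟨h1, h2⟩
    ext ⟨f, b⟩
    constructor
    · intro hl
      by_cases hlh : (f, b) ∈ h
      · exact Or.inr hlh
      · left
        refine ⟨?_, ?_⟩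
        · by_contra hns
          exact hlh (h1 ⟨hl, hns⟩)
        · intro hc
          have : (f, !b) ∈ s' := h2 hc
          exact ((state_mem_iff hs' f b).mp hl) this
    · rintro (⟨hls, hlc⟩ | hlh)
      · by_contra hns
        have hcs' : (f, !b) ∈ s' := by
          have := (state_mem_iff hs' f (!b)).mpr
          simp only [Bool.not_not] at this
          exact this hns
        have hcns : (f, !b) ∉ s := by
          intro hc
          exact ((state_mem_iff hs f b).mp hls) hc
        exact hlc (h1 ⟨hcs', hcns⟩)
      · exact h2 hlh
  · rintro rfl
    refine ⟨?_, fun l hl => Or.inr hl⟩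
    rintro ⟨f, b⟩ ⟨hl, hns⟩
    rcases hl with ⟨hls, _⟩ | hlh
    · exact absurd hls hns
    · exact hlh
end

section
/- Let (s_i, s'_i)_{i ∈ I} be a finite nonempty family of positive effect examples and suppose h is an effect hypothesis consistent with all of them, i.e., s'_i = (s_i \ complement(h)) ∪ h for each i. Then ⋃_{i ∈ I} (s'_i \ s_i) ⊆ h ⊆ ⋂_{i ∈ I} s'_i. -/
/-- any effect hypothesis consistent with all positive examples lies
between the union of deltas and the intersection of post-states. -/
theorem effect_bounds {F : Type*} [Fintype F] {I : Type*} [Fintype I] [Nonempty I]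
    (s s' : I → Set (F × Bool)) (h : Set (F × Bool))
    (hstate : ∀ i, IsState (s i)) (hstate' : ∀ i, IsState (s' i))
    (hcons : ∀ i, s' i = Suc h (s i)) :
    (⋃ i, s' i \ s i) ⊆ h ∧ h ⊆ ⋂ i, s' i := by
  constructor
  · intro l hl
    obtain ⟨_, ⟨i, rfl⟩, hl⟩ := hl
    simp only [hcons i, Suc] at hl
    rcases hl.1 with (⟨hs, _⟩ | hh)
    · exact absurd hs hl.2
    · exact hh
  · intro l hl
    simp only [Set.mem_iInter]
    intro i
    rw [hcons i]
    exact Or.inr hl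
end

section
/- Suppose a finite nonempty family of positive examples (s_i, s'_i)_{i ∈ I} admits at least one consistent effect hypothesis (i.e., there exists e with s'_i = (s_i \ complement(e)) ∪ e for all i). Then ⋃_{i ∈ I} (s'_i \ s_i) = (⋂_{i ∈ I} s'_i) \ (⋂_{i ∈ I} s_i). In words: the union of the pre-to-post deltas equals the intersection of post-states minus the intersection of pre-states. -/
/-- if some consistent effect hypothesis exists, the union of deltas
equals the intersection of post-states minus the intersection of pre-states. -/
theorem delta_union_eq {F : Type*} [Fintype F] {I : Type*} [Fintype I] [Nonempty I]
    (s s' : I → Set (F × Bool))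
    (hstate : ∀ i, IsState (s i)) (hstate' : ∀ i, IsState (s' i))
    (hex : ∃ e : Set (F × Bool), ∀ i, s' i = Suc e (s i)) :
    (⋃ i, s' i \ s i) = (⋂ i, s' i) \ ⋂ i, s i := by
  obtain ⟨e, he⟩ := hex
  ext l
  simp only [Set.mem_iUnion, Set.mem_diff, Set.mem_iInter]
  constructor
  · rintro ⟨i, hl', hl⟩
    have hle : l ∈ e := by
      have := hl'
      rw [he i] at this
      rcases this with ⟨h1, _⟩ | h2
      · exact absurd h1 hl
      · exact h2
    refine ⟨fun j => ?_, fun h => hl (h i)⟩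
    rw [he j]; exact Or.inr hle
  · rintro ⟨h1, h2⟩
    push_neg at h2
    obtain ⟨i, hi⟩ := h2
    exact ⟨i, h1 i, hi⟩
end

section
/- Let (s_i, s'_i)_{i ∈ I} be a finite nonempty family of positive examples, and let he, he' both be effect hypotheses consistent with all examples (s'_i = (s_i \ complement(he)) ∪ he and likewise for he', for every i). Then he \ he' ⊆ ⋂_{i ∈ I} s_i. -/
/-- the difference of two consistent effect hypotheses is contained in
the intersection of the pre-states. -/
theorem effect_diff_subset {F : Type*} [Fintype F] {I : Type*} [Fintype I] [Nonempty I]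
    (s s' : I → Set (F × Bool)) (he he' : Set (F × Bool))
    (hstate : ∀ i, IsState (s i)) (hstate' : ∀ i, IsState (s' i))
    (hcons : ∀ i, s' i = Suc he (s i)) (hcons' : ∀ i, s' i = Suc he' (s i)) :
    he \ he' ⊆ ⋂ i, s i := by
  intro l hl
  simp only [Set.mem_iInter]
  intro i
  have h1 : l ∈ s' i := by rw [hcons i]; exact Or.inr hl.1
  rw [hcons' i] at h1
  rcases h1 with h1 | h1
  · exact h1.1
  · exact absurd h1 hl.2
end

section
/- Let he and he' be effect hypotheses, let s' be a state with he ⊆ s' and he' ⊆ s', and let s be a state such that (he \ he') ∪ (he' \ he) ⊆ s. Then applying either hypothesis to s yields the same successor: (s \ complement(he)) ∪ he = (s \ complement(he')) ∪ he'. -/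
lemma isState_not_compl {F : Type*} {s : Set (F × Bool)} (hs : IsState s) {f : F} {b : Bool}
    (h : (f, b) ∈ s) : (f, !b) ∉ s := by
  rcases hs f with ⟨ht, hf⟩ | ⟨hf, ht⟩ <;> cases b <;> simp_all

lemma suc_subset_aux {F : Type*} (s s' he he' : Set (F × Bool))
    (hs : IsState s) (hs' : IsState s')
    (h1 : he ⊆ s') (h2 : he' ⊆ s')
    (hsd : (he \ he') ∪ (he' \ he) ⊆ s) :
    Suc he s ⊆ Suc he' s := by
  rintro ⟨f, b⟩ (⟨hmem, hnc⟩ | hmem)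
  · -- l ∈ s \ litCompl he
    by_cases hc : (f, !b) ∈ he'
    · exfalso
      have : (f, !b) ∈ s := hsd (Or.inr ⟨hc, hnc⟩)
      exact isState_not_compl hs hmem this
    · exact Or.inl ⟨hmem, hc⟩
  · by_cases hc : (f, b) ∈ he'
    · exact Or.inr hc
    · left
      constructor
      · exact hsd (Or.inl ⟨hmem, hc⟩)
      · intro hco
        exact isState_not_compl hs' (h1 hmem) (h2 hco)

/-- two effect hypotheses included in a common post-state yield the same
successor on any state containing their symmetric difference. -/
theorem suc_eq_of_symmDiff_subset {F : Type*} (s s' he he' : Set (F × Bool))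
    (hs : IsState s) (hs' : IsState s')
    (h1 : he ⊆ s') (h2 : he' ⊆ s')
    (hsd : (he \ he') ∪ (he' \ he) ⊆ s) :
    Suc he s = Suc he' s := by
  apply Set.Subset.antisymm
  · exact suc_subset_aux s s' he he' hs hs' h1 h2 hsd
  · exact suc_subset_aux s s' he' he hs hs' h2 h1
      (by rintro l (h | h) <;> [exact hsd (Or.inr h); exact hsd (Or.inl h)])
end

section
/- Correctness of the UUP update rule: let h_L and h_U be sets of literals with h_U ⊆ s for a negative-example pre-state s. Then for any hypothesis h with h_U ⊆ h ⊆ h_L that is consistent with the negative example (h ⊈ s), there exists a literal l ∈ h_L \ s such that h_U ∪ {l} ⊆ h; moreover every such h_U ∪ {l} with l ∈ h_L \ s satisfies h_U ∪ {l} ⊈ s. -/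
/-- correctness of the UUP update rule. -/
theorem uup_correct {F : Type*} (s hL hU : Set (F × Bool)) (hUs : hU ⊆ s) :
    (∀ h : Set (F × Bool), hU ⊆ h → h ⊆ hL → ¬ h ⊆ s →
      ∃ l ∈ hL \ s, hU ∪ {l} ⊆ h) ∧
    (∀ l ∈ hL \ s, ¬ hU ∪ {l} ⊆ s) := by
  constructor
  · intro h hUh hhL hns
    rw [Set.not_subset] at hns
    obtain ⟨l, hl, hls⟩ := hns
    exact ⟨l, ⟨hhL hl, hls⟩, Set.union_subset hUh (by simpa using hl)⟩
  · intro l hl hsub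
    exact hl.2 (hsub (Set.mem_union_right _ rfl))
end

section
/- Soundness of the lower-boundary model (per action): let (s_i, s'_i)_{i ∈ I} be a finite nonempty family of positive examples for an action, let hp_L = ⋂_i s_i and he_L = ⋃_i (s'_i \ s_i), and assume the family admits at least one consistent effect hypothesis. Then for every pair (p', e') consistent with all examples (p' ⊆ s_i and s'_i = (s_i \ complement(e')) ∪ e' for all i) and every state s with hp_L ⊆ s, we have p' ⊆ s and (s \ complement(he_L)) ∪ he_L = (s \ complement(e')) ∪ e'. Hence every transition generated using (hp_L, he_L) is a transition of every consistent model. -/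
/-- soundness of the lower-boundary model (per action). -/
theorem lower_boundary_sound {F : Type*} [Fintype F] {I : Type*} [Fintype I] [Nonempty I]
    (s s' : I → Set (F × Bool))
    (hstate : ∀ i, IsState (s i)) (hstate' : ∀ i, IsState (s' i))
    (hex : ∃ e : Set (F × Bool), ∀ i, s' i = Suc e (s i)) :
    ∀ p' e' : Set (F × Bool),
      (∀ i, p' ⊆ s i) → (∀ i, s' i = Suc e' (s i)) →
      ∀ t : Set (F × Bool), IsState t → (⋂ i, s i) ⊆ t →
        p' ⊆ t ∧ Suc (⋃ i, s' i \ s i) t = Suc e' t := by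
  intro p' e' hp he t ht hsub
  have hmem : ∀ (u : Set (F × Bool)), IsState u → ∀ f b, (f, b) ∈ u → (f, !b) ∉ u := by
    intro u hu f b h1 h2
    rcases hu f with ⟨ha, hb⟩ | ⟨ha, hb⟩ <;> cases b <;> simp_all
  have hcf : ∀ f b, (f, b) ∈ e' → (f, !b) ∉ e' := by
    intro f b h1 h2
    obtain ⟨i⟩ := ‹Nonempty I›
    have m1 : (f, b) ∈ s' i := by rw [he i]; exact Or.inr h1
    have m2 : (f, !b) ∈ s' i := by rw [he i]; exact Or.inr h2
    exact hmem _ (hstate' i) f b m1 m2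
  have hsubE : (⋃ i, s' i \ s i) ⊆ e' := by
    intro l hl
    simp only [Set.mem_iUnion, Set.mem_diff] at hl
    obtain ⟨i, h1, h2⟩ := hl
    rw [he i] at h1
    rcases h1 with ⟨h1, _⟩ | h1
    · exact absurd h1 h2
    · exact h1
  have hin : ∀ l ∈ e', l ∈ (⋃ i, s' i \ s i) ∨ l ∈ t := by
    intro l hl
    by_cases hc : ∀ i, l ∈ s i
    · exact Or.inr (hsub (Set.mem_iInter.2 hc))
    · push_neg at hc
      obtain ⟨i, hi⟩ := hc
      refine Or.inl (Set.mem_iUnion.2 ⟨i, ?_, hi⟩)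
      rw [he i]; exact Or.inr hl
  refine ⟨fun l hl => hsub (Set.mem_iInter.2 fun i => hp i hl), ?_⟩
  ext ⟨f, b⟩
  simp only [Suc, litCompl, Set.mem_union, Set.mem_diff, Set.mem_setOf_eq]
  by_cases h1 : (f, b) ∈ ⋃ i, s' i \ s i
  · have := hsubE h1
    constructor <;> intro _ <;> [exact Or.inr this; exact Or.inr h1]
  · by_cases h2 : (f, !b) ∈ ⋃ i, s' i \ s i
    · have hbar : (f, !b) ∈ e' := hsubE h2
      have hne : (f, b) ∉ e' := by
        intro h; exact hcf f (!b) hbar (by simpa using h)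
      constructor
      · rintro (⟨_, hc⟩ | hc) <;> [exact absurd h2 hc; exact absurd hc h1]
      · rintro (⟨_, hc⟩ | hc) <;> [exact absurd hbar hc; exact absurd hc hne]
    · by_cases h3 : (f, b) ∈ e'
      · have htmem : (f, b) ∈ t := (hin _ h3).resolve_left h1
        constructor <;> intro _ <;> [exact Or.inr h3; exact Or.inl ⟨htmem, h2⟩]
      · by_cases h4 : (f, !b) ∈ e'
        · have htbar : (f, !b) ∈ t := (hin _ h4).resolve_left h2
          have hnt : (f, b) ∉ t := by
            intro h; exact hmem t ht f b h htbar
          constructor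
          · rintro (⟨hc, _⟩ | hc) <;> [exact absurd hc hnt; exact absurd hc h1]
          · rintro (⟨hc, _⟩ | hc) <;> [exact absurd hc hnt; exact absurd hc h3]
        · constructor
          · rintro (⟨hc, _⟩ | hc) <;> [exact Or.inl ⟨hc, h4⟩; exact absurd hc h1]
          · rintro (⟨hc, _⟩ | hc) <;> [exact Or.inl ⟨hc, h2⟩; exact absurd hc h3]
end
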